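/- arXiv:1303.4251 — 3 statements merged into one kernel-verified Lean document; each statement's English description precedes it below -/
import Mathlib

section
/- Let a_n > 0 and u_n = sqrt(a_1 + sqrt(a_2 + ... + sqrt(a_n))). Then for every n ≥ 1, u_{n+1} - u_n ≤ sqrt(a_{n+1}) / (2^n · sqrt(a_1) · sqrt(a_2) · ... · sqrt(a_n)). -/
/-!
Peeling off the outermost root, `u_{n+1} - u_n = √(a₁ + x) - √(a₁ + y)` where `x ≥ y ≥ 0` are the
two tails starting at `a₂`, and `√(c + x) - √(c + y) = (x - y) / (√(c + x) + √(c + y))` is at most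
`(x - y) / (2 √c)`. Iterating down to the innermost level, where the difference is `√a_{n+1}`,
each level contributes one factor `1 / (2 √a_i)`.
-/

/-- `nest a n i = sqrt (a i + sqrt (a (i+1) + ⋯ + sqrt (a n)))`;
the `n`-th approximant `u n` of the continued square root is `nest a n 1`. -/
noncomputable def nest (a : ℕ → ℝ) (n : ℕ) : ℕ → ℝ
  | i => if _ : i ≤ n then Real.sqrt (a i + nest a n (i + 1)) else 0
termination_by i => n + 1 - i
decreasing_by omega

open Finset

lemma nest_of_le (a : ℕ → ℝ) {n i : ℕ} (h : i ≤ n) :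
    nest a n i = √(a i + nest a n (i + 1)) := by
  rw [nest, dif_pos h]

lemma nest_of_lt (a : ℕ → ℝ) {n i : ℕ} (h : n < i) : nest a n i = 0 := by
  rw [nest, dif_neg (by omega)]

lemma nest_nonneg (a : ℕ → ℝ) (n i : ℕ) : 0 ≤ nest a n i := by
  rcases le_or_gt i n with h | h
  · rw [nest_of_le a h]; exact Real.sqrt_nonneg _
  · rw [nest_of_lt a h]

lemma nest_le_nest_succ (a : ℕ → ℝ) (n : ℕ) : ∀ i, nest a n i ≤ nest a (n + 1) i
  | i => by
    rcases le_or_gt i n with h | h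
    · rw [nest_of_le a h, nest_of_le a (show i ≤ n + 1 by omega)]
      exact Real.sqrt_le_sqrt (by linarith [nest_le_nest_succ a n (i + 1)])
    · rw [nest_of_lt a h]
      exact nest_nonneg _ _ _
termination_by i => n + 1 - i

lemma Real.sqrt_add_sub_sqrt_add_le {c x y : ℝ} (hc : 0 < c) (hy : 0 ≤ y) (hyx : y ≤ x) :
    √(c + x) - √(c + y) ≤ (x - y) / (2 * √c) := by
  have hcx : √c ≤ √(c + x) := Real.sqrt_le_sqrt (by linarith)
  have hcy : √c ≤ √(c + y) := Real.sqrt_le_sqrt (by linarith)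
  have hyx' : √(c + y) ≤ √(c + x) := Real.sqrt_le_sqrt (by linarith)
  rw [le_div_iff₀ (by positivity)]
  calc (√(c + x) - √(c + y)) * (2 * √c)
      ≤ (√(c + x) - √(c + y)) * (√(c + x) + √(c + y)) :=
        mul_le_mul_of_nonneg_left (by linarith) (sub_nonneg.2 hyx')
    _ = x - y := by
      rw [mul_comm, ← sq_sub_sq, Real.sq_sqrt (by linarith), Real.sq_sqrt (by linarith)]
      ring

theorem nest_succ_sub_nest_le (a : ℕ → ℝ) {n i : ℕ} (hi : i ≤ n + 1)
    (ha : ∀ j ∈ Icc i n, 0 < a j) :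
    nest a (n + 1) i - nest a n i ≤
      √(a (n + 1)) / (2 ^ (n + 1 - i) * ∏ j ∈ Icc i n, √(a j)) := by
  induction hi using Nat.decreasingInduction with
  | self =>
    simp [nest_of_le, nest_of_lt]
  | of_succ i hi ih =>
    have hai : 0 < a i := ha i (mem_Icc.2 ⟨le_rfl, by omega⟩)
    have ih := ih fun j hj => ha j (Icc_subset_Icc_left i.le_succ hj)
    rw [nest_of_le a hi.le, nest_of_le a (Nat.le_of_lt_succ hi)]
    calc √(a i + nest a (n + 1) (i + 1)) - √(a i + nest a n (i + 1))
        ≤ (nest a (n + 1) (i + 1) - nest a n (i + 1)) / (2 * √(a i)) :=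
          Real.sqrt_add_sub_sqrt_add_le hai (nest_nonneg a n _) (nest_le_nest_succ a n _)
      _ ≤ √(a (n + 1)) / (2 ^ (n + 1 - (i + 1)) * ∏ j ∈ Icc (i + 1) n, √(a j)) /
            (2 * √(a i)) := by
          gcongr
      _ = √(a (n + 1)) / (2 ^ (n + 1 - i) * ∏ j ∈ Icc i n, √(a j)) := by
          rw [div_div, ← mul_prod_Ioc_eq_prod_Icc (Nat.le_of_lt_succ hi),
            ← Icc_add_one_left_eq_Ioc, show n + 1 - i = n + 1 - (i + 1) + 1 by omega, pow_succ]
          ring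

theorem polya_szego_inequality (a : ℕ → ℝ) (ha : ∀ n, 1 ≤ n → 0 < a n) :
    ∀ n, 1 ≤ n →
      nest a (n + 1) 1 - nest a n 1 ≤
        Real.sqrt (a (n + 1)) /
          (2 ^ n * ∏ i ∈ Finset.Icc 1 n, Real.sqrt (a i)) := by
  intro n _
  simpa using nest_succ_sub_nest_le a (i := 1) (by omega) fun j hj => ha j (mem_Icc.1 hj).1
end

section
/- With notation as in the key lemma (a_n > 0, r_n positive integers, v_n the n-th approximant of the continued radical, f_k the denesting functions), for every n ≥ 1: v_{n+1} - v_n ≤ a_{n+1}^{1/r_{n+1}} / ∏_{i=1}^n (r_i · f_{i-1}(v_n)^{r_i - 1}). -/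
/-- `rad a r n i = (a i + (a (i+1) + ⋯ + (a n) ^ (1/r n)) ^ (1/r (i+1))) ^ (1/r i)`;
the `n`-th approximant `v n` of the continued radical is `rad a r n 1`. -/
noncomputable def rad (a : ℕ → ℝ) (r : ℕ → ℕ) (n : ℕ) : ℕ → ℝ
  | i => if _ : i ≤ n then (a i + rad a r n (i + 1)) ^ ((r i : ℝ)⁻¹) else 0
termination_by i => n + 1 - i
decreasing_by omega

/-- The denesting functions: `den a r 0 y = y`, `den a r k y = (den a r (k-1) y) ^ (r k) - a k`. -/
noncomputable def den (a : ℕ → ℝ) (r : ℕ → ℕ) : ℕ → ℝ → ℝ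
  | 0, y => y
  | k + 1, y => (den a r k y) ^ (r (k + 1)) - a (k + 1)

/-! Write `x i = rad a r (n + 1) i` and `y i = rad a r n i` for the tails of the two
approximants, so that `f_{i-1}(v_n) = y i`. Raising to the `r i`-th power peels off one level of
both radicals: `x i ^ r i - y i ^ r i = x (i + 1) - y (i + 1)`, while
`r y ^ (r - 1) (x - y) ≤ x ^ r - y ^ r` for `0 ≤ y ≤ x`. Chaining these from `i = 1` to `n`
bounds `(∏ r i y i ^ (r i - 1)) (x 1 - y 1)` by
`x (n + 1) - y (n + 1) = a (n + 1) ^ (1 / r (n + 1))`. -/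

open Finset

section OrderedRing

variable {R : Type*} [CommRing R] [LinearOrder R] [IsStrictOrderedRing R]

theorem natCast_mul_pow_pred_mul_sub_le_pow_sub_pow {x y : R} (hy : 0 ≤ y) (hyx : y ≤ x)
    (m : ℕ) : m * y ^ (m - 1) * (x - y) ≤ x ^ m - y ^ m := by
  rw [← geom_sum₂_mul]
  refine mul_le_mul_of_nonneg_right ?_ (sub_nonneg.2 hyx)
  calc (m : R) * y ^ (m - 1) = ∑ i ∈ range m, y ^ (m - 1) := by simp
    _ = ∑ i ∈ range m, y ^ i * y ^ (m - 1 - i) := sum_congr rfl fun i hi => by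
        rw [← pow_add, Nat.add_sub_cancel' (by rw [mem_range] at hi; omega)]
    _ ≤ ∑ i ∈ range m, x ^ i * y ^ (m - 1 - i) := by gcongr

theorem prod_mul_sub_le_sub_of_pow_sub_pow {x y : ℕ → R} {r : ℕ → ℕ} {k : ℕ}
    (hy : ∀ i ∈ Icc 1 k, 0 ≤ y i) (hyx : ∀ i ∈ Icc 1 k, y i ≤ x i)
    (hstep : ∀ i ∈ Icc 1 k, x i ^ r i - y i ^ r i = x (i + 1) - y (i + 1)) :
    (∏ i ∈ Icc 1 k, (r i : R) * y i ^ (r i - 1)) * (x 1 - y 1) ≤ x (k + 1) - y (k + 1) := by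
  induction k with
  | zero => simp
  | succ k ih =>
    have hk : k + 1 ∈ Icc 1 (k + 1) := by simp
    have hsub : Icc 1 k ⊆ Icc 1 (k + 1) := Icc_subset_Icc_right k.le_succ
    have ih := ih (fun i hi => hy i (hsub hi)) (fun i hi => hyx i (hsub hi))
      (fun i hi => hstep i (hsub hi))
    rw [prod_Icc_succ_top (by omega)]
    calc (∏ i ∈ Icc 1 k, (r i : R) * y i ^ (r i - 1))
          * (r (k + 1) * y (k + 1) ^ (r (k + 1) - 1)) * (x 1 - y 1)
        = r (k + 1) * y (k + 1) ^ (r (k + 1) - 1)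
          * ((∏ i ∈ Icc 1 k, (r i : R) * y i ^ (r i - 1)) * (x 1 - y 1)) := by ring
      _ ≤ r (k + 1) * y (k + 1) ^ (r (k + 1) - 1) * (x (k + 1) - y (k + 1)) := by
        have := hy _ hk
        gcongr
      _ ≤ x (k + 1) ^ r (k + 1) - y (k + 1) ^ r (k + 1) :=
        natCast_mul_pow_pred_mul_sub_le_pow_sub_pow (hy _ hk) (hyx _ hk) _
      _ = x (k + 1 + 1) - y (k + 1 + 1) := hstep _ hk

end OrderedRing

section Radical

variable {a : ℕ → ℝ} {r : ℕ → ℕ} {n i : ℕ}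

theorem rad_of_le (h : i ≤ n) :
    rad a r n i = (a i + rad a r n (i + 1)) ^ ((r i : ℝ)⁻¹) := by
  rw [rad, dif_pos h]

theorem rad_of_lt (h : n < i) : rad a r n i = 0 := by
  rw [rad, dif_neg (Nat.not_le.2 h)]

theorem rad_nonneg (ha : ∀ i, 1 ≤ i → 0 ≤ a i) (hi : 1 ≤ i) : 0 ≤ rad a r n i := by
  induction i using rad.induct n with
  | case1 i _ hin ih =>
    rw [rad_of_le (i := i) hin]
    exact Real.rpow_nonneg (add_nonneg (ha i hi) (ih (by omega))) _
  | case2 i _ hin => rw [rad_of_lt (Nat.lt_of_not_le hin)]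

theorem rad_pos (ha : ∀ i, 1 ≤ i → 0 < a i) (hi : 1 ≤ i) (hin : i ≤ n) :
    0 < rad a r n i := by
  rw [rad_of_le hin]
  exact Real.rpow_pos_of_pos
    (add_pos_of_pos_of_nonneg (ha i hi) (rad_nonneg (fun j hj => (ha j hj).le) (by omega))) _

theorem rad_le_rad_succ (ha : ∀ i, 1 ≤ i → 0 ≤ a i) (hi : 1 ≤ i) :
    rad a r n i ≤ rad a r (n + 1) i := by
  induction i using rad.induct n with
  | case1 i _ hin ih =>
    rw [rad_of_le (i := i) hin, rad_of_le (n := n + 1) (by omega)]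
    exact Real.rpow_le_rpow (add_nonneg (ha i hi) (rad_nonneg ha (by omega)))
      (add_le_add le_rfl (ih (by omega))) (by positivity)
  | case2 i _ hin => rw [rad_of_lt (Nat.lt_of_not_le hin)]; exact rad_nonneg ha hi

theorem rad_pow (ha : ∀ i, 1 ≤ i → 0 ≤ a i) (hr : r i ≠ 0) (hi : 1 ≤ i)
    (hin : i ≤ n) :
    rad a r n i ^ r i = a i + rad a r n (i + 1) := by
  rw [rad_of_le hin]
  exact Real.rpow_inv_natCast_pow (add_nonneg (ha i hi) (rad_nonneg ha (by omega))) hr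

theorem den_rad (ha : ∀ i, 1 ≤ i → 0 ≤ a i) (hr : ∀ i, r i ≠ 0) {k : ℕ}
    (hk : k ≤ n) :
    den a r k (rad a r n 1) = rad a r n (k + 1) := by
  induction k with
  | zero => rfl
  | succ k ih =>
    rw [den, ih (by omega), rad_pow ha (hr _) (by omega) hk, add_sub_cancel_left]

end Radical

theorem main_inequality (a : ℕ → ℝ) (r : ℕ → ℕ) (ha : ∀ n, 1 ≤ n → 0 < a n)
    (hr : ∀ n, 1 ≤ r n) :
    ∀ n, 1 ≤ n →
      rad a r (n + 1) 1 - rad a r n 1 ≤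
        (a (n + 1)) ^ ((r (n + 1) : ℝ)⁻¹) /
          ∏ i ∈ Finset.Icc 1 n,
            (r i : ℝ) * (den a r (i - 1) (rad a r n 1)) ^ (r i - 1) := by
  intro n _
  have ha₀ : ∀ i, 1 ≤ i → 0 ≤ a i := fun i hi => (ha i hi).le
  have hr₀ : ∀ i, r i ≠ 0 := fun i => Nat.one_le_iff_ne_zero.1 (hr i)
  have hden : ∀ i ∈ Icc 1 n, den a r (i - 1) (rad a r n 1) = rad a r n i := fun i hi => by
    rw [mem_Icc] at hi
    rw [den_rad ha₀ hr₀ (by omega), Nat.sub_add_cancel hi.1]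
  have hprod : 0 < ∏ i ∈ Icc 1 n, (r i : ℝ) * rad a r n i ^ (r i - 1) :=
    prod_pos fun i hi => by
      rw [mem_Icc] at hi
      have := rad_pos (r := r) ha hi.1 hi.2
      have : (0 : ℝ) < r i := by exact_mod_cast hr i
      positivity
  have key := prod_mul_sub_le_sub_of_pow_sub_pow
    (x := rad a r (n + 1)) (y := rad a r n) (k := n)
    (fun i hi => rad_nonneg ha₀ (mem_Icc.1 hi).1)
    (fun i hi => rad_le_rad_succ ha₀ (mem_Icc.1 hi).1)
    (fun i hi => by
      rw [mem_Icc] at hi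
      rw [rad_pow ha₀ (hr₀ i) hi.1 (by omega), rad_pow ha₀ (hr₀ i) hi.1 hi.2,
        add_sub_add_left_eq_sub])
  rw [rad_of_le le_rfl, rad_of_lt (Nat.lt_succ_self _), rad_of_lt (Nat.lt_succ_self _), add_zero,
    sub_zero] at key
  rw [prod_congr rfl fun i hi => by rw [hden i hi], le_div_iff₀ hprod]
  linarith
end

section
/- Let v_n = (1 + (2 + (3 + ... + n^{1/n})^{1/(n-1)})...)^{1/1}, i.e., the n-th approximant of the continued radical with a_k = r_k = k (so v_n = 1 + sqrt(2 + cbrt(3 + ...))). Then for every n ≥ 1, v_{n+1} - v_n ≤ (∏_{i=1}^{n+1} i^{1/i}) / (n!)^2 ≤ 3^{(n+1)/3} / (n!)^2. -/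
/-- The `n`-th approximant of `1 + sqrt (2 + (3 + (4 + ⋯) ^ (1/4)) ^ (1/3))`,
with `a k = r k = k`. -/
noncomputable def v (n : ℕ) : ℝ := rad (fun k => (k : ℝ)) (fun k => k) n 1

/-!
Concavity of `x ↦ x ^ (1/i)` gives the tangent-line bound
`(i + y') ^ (1/i) - (i + y) ^ (1/i) ≤ (1/i) · i ^ (1/i - 1) · (y' - y)` for `y ≤ y'`,
the base being at least `i`. The approximants `v (n+1)` and `v n` differ first at the innermost
level `n + 1`, by `(n+1) ^ (1/(n+1))`, and propagating that difference outward multiplies it by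
`i ^ (1/i) / i ^ 2` at each level `i ≤ n`. The second bound is `i ^ (1/i) ≤ 3 ^ (1/3)`,
i.e. `i ^ 3 ≤ 3 ^ i`.
-/

lemma rpow_sub_rpow_le_mul_rpow_sub_one {x y p : ℝ} (hx : 0 ≤ x) (hy : 0 < y) (hp₀ : 0 ≤ p)
    (hp₁ : p ≤ 1) : x ^ p - y ^ p ≤ p * y ^ (p - 1) * (x - y) := by
  have hxy : x = y * (1 + (x - y) / y) := by field_simp; ring
  have hs : -1 ≤ (x - y) / y := by rw [le_div_iff₀ hy]; linarith
  have bernoulli := rpow_one_add_le_one_add_mul_self hs hp₀ hp₁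
  calc x ^ p - y ^ p = y ^ p * ((1 + (x - y) / y) ^ p - 1) := by
        rw [mul_sub, mul_one, ← Real.mul_rpow hy.le (by linarith), ← hxy]
    _ ≤ y ^ p * (p * ((x - y) / y)) := by
        gcongr; linarith
    _ = p * y ^ (p - 1) * (x - y) := by
        rw [Real.rpow_sub_one hy.ne']; ring

namespace rad

variable {a : ℕ → ℝ} {r : ℕ → ℕ} {n i : ℕ}

lemma of_le (h : i ≤ n) : rad a r n i = (a i + rad a r n (i + 1)) ^ ((r i : ℝ)⁻¹) := by
  rw [rad, dif_pos h]

lemma of_lt (h : n < i) : rad a r n i = 0 := by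
  rw [rad, dif_neg (by omega)]

lemma nonneg (ha : ∀ k, 0 ≤ a k) : 0 ≤ rad a r n i := by
  induction i using rad.induct n with
  | case1 i _ hi ih => rw [of_le hi]; exact Real.rpow_nonneg (add_nonneg (ha i) ih) _
  | case2 i _ hi => rw [of_lt (by omega)]

lemma le_succ (ha : ∀ k, 0 ≤ a k) : rad a r n i ≤ rad a r (n + 1) i := by
  induction i using rad.induct n with
  | case1 i _ hi ih =>
    rw [of_le hi, of_le (Nat.le_succ_of_le hi)]
    gcongr
    exact add_nonneg (ha i) (nonneg ha)
  | case2 i _ hi => rw [of_lt (by omega)]; exact nonneg ha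

lemma succ_sub_le (ha : ∀ k, 0 ≤ a k) (hai : 0 < a i) (hri : 0 < r i) (hi : i ≤ n) :
    rad a r (n + 1) i - rad a r n i ≤
      (r i : ℝ)⁻¹ * a i ^ ((r i : ℝ)⁻¹ - 1) * (rad a r (n + 1) (i + 1) - rad a r n (i + 1)) := by
  have hp₁ : (r i : ℝ)⁻¹ ≤ 1 := inv_le_one_of_one_le₀ (by exact_mod_cast hri)
  have hy : a i ≤ a i + rad a r n (i + 1) := le_add_of_nonneg_right (nonneg ha)
  rw [of_le hi, of_le (by omega)]
  calc _ ≤ (r i : ℝ)⁻¹ * (a i + rad a r n (i + 1)) ^ ((r i : ℝ)⁻¹ - 1) *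
          (a i + rad a r (n + 1) (i + 1) - (a i + rad a r n (i + 1))) :=
        rpow_sub_rpow_le_mul_rpow_sub_one (add_nonneg (ha i) (nonneg ha)) (hai.trans_le hy)
          (by positivity) hp₁
    _ ≤ _ := by
        rw [add_sub_add_left_eq_sub]
        gcongr (r i : ℝ)⁻¹ * ?_ * _
        · exact sub_nonneg.2 (le_succ ha)
        · exact Real.rpow_le_rpow_of_nonpos hai hy (by linarith)

lemma succ_sub_le_prod (ha : ∀ k, 0 ≤ a k) (ha₀ : ∀ k, i ≤ k → 0 < a k)
    (hr : ∀ k, i ≤ k → 0 < r k) (hi : i ≤ n + 1) :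
    rad a r (n + 1) i - rad a r n i ≤
      (∏ k ∈ Finset.Ico i (n + 1), (r k : ℝ)⁻¹ * a k ^ ((r k : ℝ)⁻¹ - 1)) *
        a (n + 1) ^ ((r (n + 1) : ℝ)⁻¹) := by
  induction hi using Nat.decreasingInduction with
  | self =>
    rw [of_le le_rfl, of_lt (Nat.lt_succ_self n), of_lt (by omega : n + 1 < n + 1 + 1)]
    simp
  | of_succ i hi ih =>
    have hc : 0 ≤ (r i : ℝ)⁻¹ * a i ^ ((r i : ℝ)⁻¹ - 1) := by
      have := ha₀ i le_rfl
      positivity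
    rw [Finset.prod_eq_prod_Ico_succ_bot hi, mul_assoc]
    refine (succ_sub_le ha (ha₀ i le_rfl) (hr i le_rfl) (by omega)).trans ?_
    gcongr
    exact ih (fun k hk => ha₀ k (by omega)) (fun k hk => hr k (by omega))

end rad

lemma v_succ_sub_le (n : ℕ) :
    v (n + 1) - v n ≤
      (∏ i ∈ Finset.Icc 1 (n + 1), (i : ℝ) ^ ((i : ℝ)⁻¹)) / ((Nat.factorial n : ℝ)) ^ 2 := by
  have coeff : ∀ k ∈ Finset.Ico 1 (n + 1),
      (k : ℝ)⁻¹ * (k : ℝ) ^ ((k : ℝ)⁻¹ - 1) = (k : ℝ) ^ ((k : ℝ)⁻¹) / (k : ℝ) ^ 2 := by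
    intro k hk
    have hk : (0 : ℝ) < k := Nat.cast_pos.2 (Finset.mem_Ico.1 hk).1
    rw [Real.rpow_sub_one hk.ne']
    field_simp
  calc v (n + 1) - v n ≤ _ :=
        rad.succ_sub_le_prod (fun k => k.cast_nonneg) (fun k hk => Nat.cast_pos.2 (by omega))
          (fun k hk => by omega) (by omega)
    _ = _ := by
        rw [Finset.prod_congr rfl coeff, Finset.prod_div_distrib, Finset.prod_pow,
          ← Nat.cast_prod, Finset.prod_Ico_id_eq_factorial, div_mul_eq_mul_div,
          ← Finset.prod_Ico_succ_top (by omega), Finset.Ico_add_one_right_eq_Icc]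

lemma cube_le_three_pow (i : ℕ) : i ^ 3 ≤ 3 ^ i := by
  induction i with
  | zero => norm_num
  | succ k ih =>
    rcases lt_or_ge k 3 with h | h
    · interval_cases k <;> norm_num
    · calc (k + 1) ^ 3 ≤ 3 * k ^ 3 := by nlinarith [Nat.mul_le_mul h (Nat.mul_le_mul h h)]
        _ ≤ 3 * 3 ^ k := Nat.mul_le_mul_left 3 ih
        _ = 3 ^ (k + 1) := (pow_succ' 3 k).symm

lemma natCast_rpow_inv_self_le {i : ℕ} (hi : 0 < i) :
    (i : ℝ) ^ ((i : ℝ)⁻¹) ≤ (3 : ℝ) ^ ((3 : ℝ)⁻¹) := by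
  have hi' : (0 : ℝ) < i := by exact_mod_cast hi
  have cube : (i : ℝ) ^ 3 ≤ (3 : ℝ) ^ i := by exact_mod_cast cube_le_three_pow i
  calc (i : ℝ) ^ ((i : ℝ)⁻¹) = ((i : ℝ) ^ 3) ^ ((3 * i : ℝ)⁻¹) := by
        rw [← Real.rpow_natCast, ← Real.rpow_mul hi'.le, Nat.cast_ofNat]; congr 1; field_simp
    _ ≤ ((3 : ℝ) ^ i) ^ ((3 * i : ℝ)⁻¹) := by gcongr
    _ = (3 : ℝ) ^ ((3 : ℝ)⁻¹) := by
        rw [← Real.rpow_natCast, ← Real.rpow_mul (by norm_num)]; congr 1; field_simp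

lemma prod_rpow_inv_self_le (n : ℕ) :
    ∏ i ∈ Finset.Icc 1 n, (i : ℝ) ^ ((i : ℝ)⁻¹) ≤ (3 : ℝ) ^ ((n : ℝ) / 3) := by
  calc ∏ i ∈ Finset.Icc 1 n, (i : ℝ) ^ ((i : ℝ)⁻¹)
      ≤ ∏ _i ∈ Finset.Icc 1 n, (3 : ℝ) ^ ((3 : ℝ)⁻¹) :=
        Finset.prod_le_prod (fun i _ => by positivity)
          (fun i hi => natCast_rpow_inv_self_le (Finset.mem_Icc.1 hi).1)
    _ = (3 : ℝ) ^ ((n : ℝ) / 3) := by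
        rw [Finset.prod_const, Nat.card_Icc, Nat.add_sub_cancel, ← Real.rpow_natCast,
          ← Real.rpow_mul (by norm_num), inv_mul_eq_div]

theorem example_radical_inequality :
    ∀ n, 1 ≤ n →
      v (n + 1) - v n ≤
          (∏ i ∈ Finset.Icc 1 (n + 1), (i : ℝ) ^ ((i : ℝ)⁻¹)) / ((Nat.factorial n : ℝ)) ^ 2 ∧
      (∏ i ∈ Finset.Icc 1 (n + 1), (i : ℝ) ^ ((i : ℝ)⁻¹)) / ((Nat.factorial n : ℝ)) ^ 2 ≤
          (3 : ℝ) ^ (((n : ℝ) + 1) / 3) / ((Nat.factorial n : ℝ)) ^ 2 := by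
  intro n _
  refine ⟨v_succ_sub_le n, ?_⟩
  gcongr
  exact_mod_cast prod_rpow_inv_self_le (n + 1)
end
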